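/- For real constants b > a > 0, if p_2 = ... = p_m = P/(m−1) (uniform) and q_2,...,q_m ≥ 0 with Σ q_k = P, and G_2,...,G_m are i.i.d. exponential(1), then E[log(a + (P/(m−1)) Σ_k G_k) − log(b + (P/(m−1)) Σ_k G_k)] ≥ E[log(a + Σ_k q_k G_k) − log(b + Σ_k q_k G_k)]. -/

import Mathlib

open MeasureTheory ProbabilityTheory Set

lemma aux_concave {a b : ℝ} (ha : 0 < a) (hab : a < b) :
    ConcaveOn ℝ (Ici 0) (fun x => Real.log (a+x) - Real.log (b+x)) := by
  have hb : 0 < b := ha.trans hab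
  have hia : ∀ x : ℝ, 0 ≤ x → 0 < a + x := fun x hx => by linarith
  have hib : ∀ x : ℝ, 0 ≤ x → 0 < b + x := fun x hx => by linarith
  apply concaveOn_of_hasDerivWithinAt2_nonpos (f' := fun x => (a+x)⁻¹ - (b+x)⁻¹)
    (f'' := fun x => (-1/(a+x)^2) - (-1/(b+x)^2)) (convex_Ici 0)
  · exact ((continuousOn_const.add continuousOn_id).log
      (fun x hx => (hia x hx).ne')).sub
      ((continuousOn_const.add continuousOn_id).log (fun x hx => (hib x hx).ne'))
  · intro x hx
    rw [interior_Ici] at hx ⊢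
    have h1 : HasDerivAt (fun x : ℝ => a + x) 1 x := by
      simpa using (hasDerivAt_id x).const_add a
    have h2 : HasDerivAt (fun x : ℝ => b + x) 1 x := by
      simpa using (hasDerivAt_id x).const_add b
    have := ((h1.log (hia x (le_of_lt hx)).ne').sub (h2.log (hib x (le_of_lt hx)).ne'))
    simpa [one_div, Pi.sub_def] using this.hasDerivWithinAt
  · intro x hx
    rw [interior_Ici] at hx ⊢
    have h1 : HasDerivAt (fun x : ℝ => a + x) 1 x := by
      simpa using (hasDerivAt_id x).const_add a
    have h2 : HasDerivAt (fun x : ℝ => b + x) 1 x := by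
      simpa using (hasDerivAt_id x).const_add b
    have := (h1.inv (hia x hx.le).ne').sub (h2.inv (hib x hx.le).ne')
    simpa [Pi.sub_def, Pi.inv_def] using this.hasDerivWithinAt
  · intro x hx
    rw [interior_Ici] at hx
    have h1 := hia x hx.le
    have h2 := hib x hx.le
    have : (a+x)^2 ≤ (b+x)^2 := by nlinarith
    have e1 : (0:ℝ) < (a+x)^2 := by positivity
    have e2 : (0:ℝ) < (b+x)^2 := by positivity
    rw [sub_nonpos, div_le_div_iff₀ e1 e2]
    nlinarith

lemma aux_bound {a b : ℝ} (ha : 0 < a) (hab : a < b) {x : ℝ} (hx : 0 ≤ x) :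
    |Real.log (a+x) - Real.log (b+x)| ≤ Real.log b - Real.log a := by
  have hb : 0 < b := ha.trans hab
  have hia : 0 < a + x := by linarith
  have hib : 0 < b + x := by linarith
  rw [abs_le]
  constructor
  · have h : Real.log (a * (b + x)) ≤ Real.log (b * (a + x)) := by
      apply Real.log_le_log (by positivity)
      nlinarith
    rw [Real.log_mul ha.ne' hib.ne', Real.log_mul hb.ne' hia.ne'] at h
    linarith
  · have h : Real.log (a + x) ≤ Real.log (b + x) :=
      Real.log_le_log hia (by linarith)
    have : Real.log a ≤ Real.log b := Real.log_le_log ha hab.le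
    linarith


-- exp measure gives no mass to negatives
lemma aux_exp_neg : (expMeasure 1) (Iio 0) = 0 := by
  rw [expMeasure, gammaMeasure, withDensity_apply _ measurableSet_Iio]
  rw [setLIntegral_congr_fun measurableSet_Iio
    (fun x (hx : x < 0) => gammaPDF_of_neg hx)]
  simp

-- joint law is product
lemma aux_map_pi {Ω : Type*} [MeasurableSpace Ω] (μ : Measure Ω) [IsProbabilityMeasure μ]
    (m : ℕ) (G : Fin m → Ω → ℝ) (hmeas : ∀ k, Measurable (G k))
    (hdist : ∀ k, μ.map (G k) = expMeasure 1)
    (hindep : iIndepFun G μ) :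
    μ.map (fun ω k => G k ω) = Measure.pi (fun _ : Fin m => expMeasure 1) := by
  haveI : IsProbabilityMeasure (expMeasure 1) := isProbabilityMeasure_expMeasure one_pos
  have hF : Measurable (fun ω k => G k ω) := measurable_pi_lambda _ hmeas
  refine (Measure.pi_eq fun s hs => ?_).symm
  rw [Measure.map_apply hF (MeasurableSet.univ_pi hs)]
  have hpre : (fun ω k => G k ω) ⁻¹' (Set.pi univ s) = ⋂ k, G k ⁻¹' s k := by
    ext ω; simp [Set.mem_pi]
  have := hindep.measure_inter_preimage_eq_mul Finset.univ (fun i _ => hs i)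
  simp only [Finset.mem_univ, iInter_true, Set.iInter_coe_set] at this
  rw [hpre]
  calc μ (⋂ k, G k ⁻¹' s k) = ∏ k, μ (G k ⁻¹' s k) := by
        simpa using this
    _ = ∏ k, (expMeasure 1) (s k) := by
        refine Finset.prod_congr rfl fun k _ => ?_
        rw [← hdist k, Measure.map_apply (hmeas k) (hs k)]

-- permutation invariance
lemma aux_perm (m : ℕ) (e : Fin m ≃ Fin m) :
    (Measure.pi (fun _ : Fin m => expMeasure 1)).map (fun x k => x (e k)) =
      Measure.pi (fun _ : Fin m => expMeasure 1) := by
  haveI : IsProbabilityMeasure (expMeasure 1) := isProbabilityMeasure_expMeasure one_pos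
  have hT : Measurable (fun (x : Fin m → ℝ) k => x (e k)) :=
    measurable_pi_lambda _ fun k => measurable_pi_apply _
  refine (Measure.pi_eq fun s hs => ?_).symm
  rw [Measure.map_apply hT (MeasurableSet.univ_pi hs)]
  have hpre : (fun (x : Fin m → ℝ) k => x (e k)) ⁻¹' (Set.pi univ s)
      = Set.pi univ (fun j => s (e.symm j)) := by
    ext x
    simp only [mem_preimage, Set.mem_pi, mem_univ, true_implies]
    exact ⟨fun h j => by simpa using h (e.symm j), fun h k => by simpa using h (e k)⟩
  rw [hpre, Measure.pi_pi]
  exact Equiv.prod_comp e.symm fun j => (expMeasure 1) (s j)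


theorem stmt9 {Ω : Type*} [MeasurableSpace Ω] (μ : Measure Ω) [IsProbabilityMeasure μ]
    (m : ℕ) (hm : 0 < m) (G : Fin m → Ω → ℝ) (hmeas : ∀ k, Measurable (G k))
    (hdist : ∀ k, μ.map (G k) = ProbabilityTheory.expMeasure 1)
    (hindep : iIndepFun G μ)
    (a b : ℝ) (ha : 0 < a) (hab : a < b)
    (q : Fin m → ℝ) (hq : ∀ k, 0 ≤ q k) (P : ℝ) (hP : ∑ k, q k = P) :
    ∫ ω, (Real.log (a + ∑ k, q k * G k ω) - Real.log (b + ∑ k, q k * G k ω)) ∂μ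
      ≤ ∫ ω, (Real.log (a + (P / m) * ∑ k, G k ω)
              - Real.log (b + (P / m) * ∑ k, G k ω)) ∂μ := by
  haveI : NeZero m := ⟨hm.ne'⟩
  haveI : IsProbabilityMeasure (expMeasure 1) := isProbabilityMeasure_expMeasure one_pos
  set ν : Measure ℝ := expMeasure 1 with hν
  set π : Measure (Fin m → ℝ) := Measure.pi (fun _ : Fin m => ν) with hπdef
  have hmap : μ.map (fun ω k => G k ω) = π := aux_map_pi μ m G hmeas hdist hindep
  set f : ℝ → ℝ := fun x => Real.log (a+x) - Real.log (b+x) with hf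
  have hfm : Measurable f := by
    apply Measurable.sub <;>
      exact Real.measurable_log.comp (measurable_const.add measurable_id)
  have hm0 : (m : ℝ) ≠ 0 := Nat.cast_ne_zero.mpr hm.ne'
  have hPnn : 0 ≤ P := hP ▸ Finset.sum_nonneg fun k _ => hq k
  -- measurability of weighted sums
  have hS : ∀ (c : Fin m → ℝ), Measurable fun x : Fin m → ℝ => ∑ k, c k * x k :=
    fun c => Finset.measurable_sum _ fun k _ => by fun_prop
  have hSu : Measurable fun x : Fin m → ℝ => (P / m) * ∑ k, x k :=
    (Finset.measurable_sum _ fun k _ => measurable_pi_apply k).const_mul _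
  -- a.e. nonnegativity of coordinates
  have hae : ∀ᵐ x ∂π, ∀ k, 0 ≤ x k := by
    rw [ae_all_iff]
    intro k
    rw [ae_iff]
    have hset : {x : Fin m → ℝ | ¬ 0 ≤ x k}
        = Set.pi univ (Function.update (fun _ : Fin m => (univ : Set ℝ)) k (Iio 0)) := by
      ext x
      simp only [mem_setOf_eq, not_le, Set.mem_pi, mem_univ, true_implies]
      constructor
      · intro h j
        rcases eq_or_ne j k with rfl | hj
        · simpa using h
        · simp [Function.update_of_ne hj]
      · intro h
        have := h k
        simpa using this
    rw [hset, hπdef, Measure.pi_pi]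
    apply Finset.prod_eq_zero (Finset.mem_univ k)
    rw [Function.update_self, hν]
    exact aux_exp_neg
  -- integrability helper
  have hint : ∀ (S : (Fin m → ℝ) → ℝ), Measurable S → (∀ᵐ x ∂π, 0 ≤ S x) →
      Integrable (fun x => f (S x)) π := by
    intro S hSm hS0
    refine (integrable_const (Real.log b - Real.log a)).mono'
      (hfm.comp hSm).aestronglyMeasurable ?_
    filter_upwards [hS0] with x hx
    simpa [hf, Real.norm_eq_abs] using aux_bound ha hab hx
  have hsum_nn : ∀ (c : Fin m → ℝ), (∀ k, 0 ≤ c k) →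
      ∀ᵐ x ∂π, 0 ≤ ∑ k, c k * x k := by
    intro c hc
    filter_upwards [hae] with x hx
    exact Finset.sum_nonneg fun k _ => mul_nonneg (hc k) (hx k)
  -- rotation invariance of integrals
  have hrot : ∀ r : Fin m,
      ∫ x, f (∑ k, q (k + r) * x k) ∂π = ∫ x, f (∑ k, q k * x k) ∂π := by
    intro r
    set e : Fin m ≃ Fin m := Equiv.subRight r with he
    have hT : Measurable (fun (x : Fin m → ℝ) k => x (e k)) :=
      measurable_pi_lambda _ fun k => measurable_pi_apply _
    have hmapT : π.map (fun x k => x (e k)) = π := aux_perm m e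
    calc ∫ x, f (∑ k, q (k + r) * x k) ∂π
        = ∫ x, f (∑ k, q k * x (e k)) ∂π := by
          congr 1; funext x; congr 1
          refine Fintype.sum_equiv (Equiv.addRight r) _ _ fun j => ?_
          simp [he, Equiv.subRight, Equiv.addRight]
      _ = ∫ y, f (∑ k, q k * y k) ∂(π.map (fun x k => x (e k))) := by
          have hgq : Measurable (fun y : Fin m → ℝ => f (∑ k, q k * y k)) :=
            hfm.comp (hS q)
          rw [integral_map hT.aemeasurable hgq.aestronglyMeasurable]
      _ = ∫ x, f (∑ k, q k * x k) ∂π := by rw [hmapT]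
  -- integrable pieces
  have hIq : Integrable (fun x : Fin m → ℝ => f (∑ k, q k * x k)) π :=
    hint _ (hS q) (hsum_nn q hq)
  have hIr : ∀ r : Fin m, Integrable (fun x : Fin m → ℝ => f (∑ k, q (k + r) * x k)) π :=
    fun r => hint _ (hS fun k => q (k + r)) (hsum_nn _ fun k => hq (k + r))
  have hIu : Integrable (fun x : Fin m → ℝ => f ((P / m) * ∑ k, x k)) π := by
    apply hint _ hSu
    filter_upwards [hae] with x hx
    exact mul_nonneg (div_nonneg hPnn (Nat.cast_nonneg m))
      (Finset.sum_nonneg fun k _ => hx k)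
  -- pointwise Jensen
  have hjensen : ∀ᵐ x ∂π, ∑ r : Fin m, (m : ℝ)⁻¹ * f (∑ k, q (k + r) * x k)
      ≤ f ((P / m) * ∑ k, x k) := by
    filter_upwards [hae] with x hx
    have hwsum : ∑ _r : Fin m, (m : ℝ)⁻¹ = 1 := by
      simp [Finset.sum_const, mul_inv_cancel₀ hm0]
    have hmem : ∀ r : Fin m, (∑ k, q (k + r) * x k) ∈ Ici (0:ℝ) :=
      fun r => Finset.sum_nonneg fun k _ => mul_nonneg (hq (k + r)) (hx k)
    have := (aux_concave ha hab).le_map_sum (t := Finset.univ)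
      (w := fun _ : Fin m => (m : ℝ)⁻¹) (p := fun r => ∑ k, q (k + r) * x k)
      (fun r _ => by positivity) hwsum (fun r _ => hmem r)
    have harg : ∑ r : Fin m, (m : ℝ)⁻¹ • (∑ k, q (k + r) * x k)
        = (P / m) * ∑ k, x k := by
      simp only [smul_eq_mul]
      rw [← Finset.mul_sum, Finset.sum_comm]
      have : ∀ k : Fin m, ∑ r : Fin m, q (k + r) * x k = P * x k := by
        intro k
        rw [← Finset.sum_mul]
        congr 1
        rw [← hP]
        exact Fintype.sum_equiv (Equiv.addLeft k) _ _ fun r => rfl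
      rw [Finset.sum_congr rfl fun k _ => this k, ← Finset.mul_sum]
      ring
    calc ∑ r : Fin m, (m : ℝ)⁻¹ * f (∑ k, q (k + r) * x k)
        = ∑ r : Fin m, (m : ℝ)⁻¹ • f (∑ k, q (k + r) * x k) := by
          simp [smul_eq_mul]
      _ ≤ f (∑ r : Fin m, (m : ℝ)⁻¹ • (∑ k, q (k + r) * x k)) := this
      _ = f ((P / m) * ∑ k, x k) := by rw [harg]
  -- the π-side inequality
  have hπineq : ∫ x, f (∑ k, q k * x k) ∂π ≤ ∫ x, f ((P / m) * ∑ k, x k) ∂π := by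
    have h1 : ∫ x, f (∑ k, q k * x k) ∂π
        = ∫ x, ∑ r : Fin m, (m : ℝ)⁻¹ * f (∑ k, q (k + r) * x k) ∂π := by
      rw [integral_finset_sum _ fun r _ => (hIr r).const_mul _]
      have : ∀ r : Fin m, ∫ x, (m : ℝ)⁻¹ * f (∑ k, q (k + r) * x k) ∂π
          = (m : ℝ)⁻¹ * ∫ x, f (∑ k, q k * x k) ∂π := by
        intro r
        rw [integral_const_mul, hrot r]
      rw [Finset.sum_congr rfl fun r _ => this r, ← Finset.sum_mul]
      simp [Finset.sum_const, mul_inv_cancel₀ hm0]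
    rw [h1]
    exact integral_mono_ae (integrable_finset_sum _ fun r _ => (hIr r).const_mul _)
      hIu hjensen
  -- transfer from μ to π
  have hF : Measurable (fun ω k => G k ω) := measurable_pi_lambda _ hmeas
  have t1 : ∫ ω, (Real.log (a + ∑ k, q k * G k ω) - Real.log (b + ∑ k, q k * G k ω)) ∂μ
      = ∫ x, f (∑ k, q k * x k) ∂π := by
    have hgq : Measurable (fun y : Fin m → ℝ => f (∑ k, q k * y k)) := hfm.comp (hS q)
    rw [← hmap]
    exact (integral_map hF.aemeasurable hgq.aestronglyMeasurable).symm
  have t2 : ∫ ω, (Real.log (a + (P / m) * ∑ k, G k ω)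
        - Real.log (b + (P / m) * ∑ k, G k ω)) ∂μ
      = ∫ x, f ((P / m) * ∑ k, x k) ∂π := by
    have hgu : Measurable (fun y : Fin m → ℝ => f ((P / m) * ∑ k, y k)) := hfm.comp hSu
    rw [← hmap]
    exact (integral_map hF.aemeasurable hgu.aestronglyMeasurable).symm
  rw [t1, t2]
  exact hπineq
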